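/- Let N ≥ 2, P = N+1, L = NP, let π_0,…,π_{M-1} be the rows of an M×N circular Florentine rectangle over Z_N, and set g_{i,k} = π_i^{−1}(k). Fix s_0 with 0 ≤ s_0 < P. For each 0 ≤ i < M define the frequency-domain sequence Û^i of length L by: for 0 ≤ r < N and 0 ≤ s < P, û^i_{Pr+s} = 0 if s = s_0; û^i_{Pr+s} = √(P/N)·ω_N^{r·g_{i,s}}·ω_{NP}^{s·g_{i,s}} if s < s_0; and û^i_{Pr+s} = √(P/N)·ω_N^{r·g_{i,s−1}}·ω_{NP}^{s·g_{i,s−1}} if s > s_0, where ω_m = e^{2πi/m}. Let U^i be the inverse unitary DFT of Û^i, i.e. u^i_t = (1/√L) Σ_{n=0}^{L-1} û^i_n ω_L^{nt}. Then for every 0 ≤ i < M and every τ with 0 < τ < L, |θ_{U^i}(τ)| = P if N divides τ and |θ_{U^i}(τ)| = 0 otherwise. -/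

import Mathlib

/-- Periodic cross-correlation of two length-`L` complex sequences. -/
noncomputable def pcc (L : ℕ) (c d : ℕ → ℂ) (τ : ℕ) : ℂ :=
  ∑ t ∈ Finset.range L, c t * (starRingEnd ℂ) (d ((t + τ) % L))

/-- Inverse unitary DFT of a length-`L` complex sequence:
`u_t = (1/√L) Σ_{n=0}^{L-1} û_n · e^{2πi·n·t/L}`. -/
noncomputable def iudft (L : ℕ) (chat : ℕ → ℂ) (t : ℕ) : ℂ :=
  ((Real.sqrt L : ℝ) : ℂ)⁻¹ * ∑ n ∈ Finset.range L,
    chat n * Complex.exp (2 * (Real.pi : ℂ) * Complex.I * (n : ℂ) * (t : ℂ) / (L : ℂ))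

noncomputable def eL (L : ℕ) (m : ℤ) : ℂ :=
  Complex.exp (2 * (Real.pi : ℂ) * Complex.I * (m : ℂ) / (L : ℂ))

lemma eL_add (L : ℕ) (a b : ℤ) : eL L (a + b) = eL L a * eL L b := by
  rw [eL, eL, eL, ← Complex.exp_add]
  congr 1
  push_cast
  ring

lemma eL_zero (L : ℕ) : eL L 0 = 1 := by simp [eL]

lemma eL_int_mul (L : ℕ) (hL : L ≠ 0) (k : ℤ) : eL L ((L : ℤ) * k) = 1 := by
  have hL' : (L : ℂ) ≠ 0 := Nat.cast_ne_zero.mpr hL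
  rw [eL]
  have h : 2 * (Real.pi : ℂ) * Complex.I * (((L : ℤ) * k : ℤ) : ℂ) / (L : ℂ)
      = (k : ℂ) * (2 * (Real.pi : ℂ) * Complex.I) := by
    push_cast
    field_simp
  rw [h, Complex.exp_int_mul_two_pi_mul_I]

lemma eL_eq_of_dvd (L : ℕ) (hL : L ≠ 0) (a b : ℤ) (h : (L : ℤ) ∣ a - b) :
    eL L a = eL L b := by
  obtain ⟨k, hk⟩ := h
  have : a = b + (L : ℤ) * k := by linarith
  rw [this, eL_add, eL_int_mul L hL, mul_one]

lemma eL_eq_one_iff (L : ℕ) (hL : L ≠ 0) (m : ℤ) : eL L m = 1 ↔ (L : ℤ) ∣ m := by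
  constructor
  · intro h
    rw [eL, Complex.exp_eq_one_iff] at h
    obtain ⟨n, hn⟩ := h
    have hπ : (Real.pi : ℂ) ≠ 0 := Complex.ofReal_ne_zero.mpr Real.pi_ne_zero
    have hL' : (L : ℂ) ≠ 0 := Nat.cast_ne_zero.mpr hL
    have hI : Complex.I ≠ 0 := Complex.I_ne_zero
    have hm : (m : ℂ) = (n : ℂ) * (L : ℂ) := by
      field_simp at hn
      have h2 : (2 : ℂ) * (Real.pi : ℂ) * Complex.I ≠ 0 := by
        simp [hπ, hI]
      have := hn
      -- hn : 2 * π * I * m = n * (2 * π * I) * L  (roughly)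
      apply mul_left_cancel₀ h2
      linear_combination (2 * (Real.pi : ℂ) * Complex.I) * this
    refine ⟨n, ?_⟩
    have : (m : ℂ) = (((L:ℤ) * n : ℤ) : ℂ) := by push_cast; linear_combination hm
    exact_mod_cast this
  · intro ⟨k, hk⟩
    rw [hk, eL_int_mul L hL]

lemma eL_pow (L : ℕ) (m : ℤ) (t : ℕ) : eL L (m * t) = (eL L m) ^ t := by
  rw [eL, eL, ← Complex.exp_nat_mul]
  congr 1
  push_cast
  ring

lemma eL_sum (L : ℕ) (hL : L ≠ 0) (m : ℤ) :
    ∑ t ∈ Finset.range L, eL L (m * t) = if (L : ℤ) ∣ m then (L : ℂ) else 0 := by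
  simp only [eL_pow]
  by_cases h : (L : ℤ) ∣ m
  · rw [if_pos h, (eL_eq_one_iff L hL m).mpr h]
    simp
  · rw [if_neg h]
    have h1 : eL L m ≠ 1 := fun hh => h ((eL_eq_one_iff L hL m).mp hh)
    rw [geom_sum_eq h1]
    have hp : eL L m ^ L = 1 := by
      rw [← eL_pow, mul_comm, eL_int_mul L hL]
    rw [hp]
    simp

lemma conj_eL (L : ℕ) (m : ℤ) : (starRingEnd ℂ) (eL L m) = eL L (-m) := by
  rw [eL, eL, ← Complex.exp_conj]
  congr 1
  simp only [map_div₀, map_mul, Complex.conj_I, map_ofNat, Complex.conj_ofReal,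
    map_intCast, map_natCast]
  push_cast
  ring

lemma eL_mul_conj (L : ℕ) (m : ℤ) : eL L m * (starRingEnd ℂ) (eL L m) = 1 := by
  rw [conj_eL, ← eL_add]
  simp [eL_zero]

lemma norm_eL (L : ℕ) (m : ℤ) : ‖eL L m‖ = 1 := by
  rw [eL]
  have h : 2 * (Real.pi : ℂ) * Complex.I * (m : ℂ) / (L : ℂ)
      = ((2 * Real.pi * (m : ℝ) / (L : ℝ) : ℝ) : ℂ) * Complex.I := by
    push_cast
    ring
  rw [h]
  exact Complex.norm_exp_ofReal_mul_I _

lemma eL_shrink (N P : ℕ) (hN : N ≠ 0) (hP : P ≠ 0) (m : ℤ) :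
    eL (N * P) ((P : ℤ) * m) = eL N m := by
  rw [eL, eL]
  congr 1
  have h1 : (N : ℂ) ≠ 0 := Nat.cast_ne_zero.mpr hN
  have h2 : (P : ℂ) ≠ 0 := Nat.cast_ne_zero.mpr hP
  push_cast
  field_simp

lemma pcc_iudft (L : ℕ) (hL : L ≠ 0) (chat : ℕ → ℂ) (U : ℕ → ℂ)
    (hU : ∀ t, U t = iudft L chat t) (τ : ℕ) :
    pcc L U U τ = ∑ n ∈ Finset.range L,
      (chat n * (starRingEnd ℂ) (chat n)) * eL L (-((n : ℤ) * τ)) := by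
  set c : ℂ := ((Real.sqrt L : ℝ) : ℂ)⁻¹ with hc
  have hccL : c * c * (L : ℂ) = 1 := by
    have hs : ((Real.sqrt L : ℝ) : ℂ) * ((Real.sqrt L : ℝ) : ℂ) = (L : ℂ) := by
      rw [← Complex.ofReal_mul, Real.mul_self_sqrt (Nat.cast_nonneg L)]
      simp
    have hLC : (L : ℂ) ≠ 0 := Nat.cast_ne_zero.mpr hL
    rw [hc, ← mul_inv, hs]
    exact inv_mul_cancel₀ hLC
  have hU1 : ∀ t : ℕ, U t = c * ∑ n ∈ Finset.range L, chat n * eL L ((n : ℤ) * t) := by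
    intro t
    rw [hU, iudft]
    congr 1
    refine Finset.sum_congr rfl fun n _ => ?_
    congr 1
    rw [eL]
    congr 1
    push_cast
    ring
  have hU2 : ∀ t : ℕ, U ((t + τ) % L)
      = c * ∑ m ∈ Finset.range L, chat m * eL L ((m : ℤ) * ((t : ℤ) + τ)) := by
    intro t
    rw [hU1]
    congr 1
    refine Finset.sum_congr rfl fun m _ => ?_
    congr 1
    refine eL_eq_of_dvd L hL _ _ ?_
    refine ⟨-((m : ℤ) * (((t + τ) / L : ℕ) : ℤ)), ?_⟩
    have h' : ((t : ℤ) + τ) = (L : ℤ) * (((t + τ) / L : ℕ) : ℤ) + (((t + τ) % L : ℕ) : ℤ) := by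
      exact_mod_cast (Nat.div_add_mod (t + τ) L).symm
    linear_combination -(m : ℤ) * h'
  have hcc : (starRingEnd ℂ) c = c := by
    rw [hc, map_inv₀, Complex.conj_ofReal]
  have horth : ∀ n m : ℕ, n ∈ Finset.range L → m ∈ Finset.range L →
      ∑ t ∈ Finset.range L, eL L (((n : ℤ) - m) * t) = if n = m then (L : ℂ) else 0 := by
    intro n m hn hm
    rw [eL_sum L hL]
    simp only [Finset.mem_range] at hn hm
    by_cases h : n = m
    · subst h
      simp
    · rw [if_neg, if_neg h]
      intro hd
      have habs : |(n : ℤ) - m| < (L : ℤ) := abs_lt.mpr ⟨by omega, by omega⟩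
      have := Int.eq_zero_of_abs_lt_dvd hd habs
      omega
  have hterm : ∀ t ∈ Finset.range L,
      U t * (starRingEnd ℂ) (U ((t + τ) % L)) =
      ∑ n ∈ Finset.range L, ∑ m ∈ Finset.range L,
        c * c * (chat n * (starRingEnd ℂ) (chat m) * eL L (-((m : ℤ) * τ))
          * eL L (((n : ℤ) - m) * t)) := by
    intro t _
    rw [hU1 t, hU2 t, map_mul, map_sum, hcc]
    simp only [map_mul, conj_eL]
    rw [mul_mul_mul_comm, Finset.sum_mul_sum, Finset.mul_sum]
    refine Finset.sum_congr rfl fun n _ => ?_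
    rw [Finset.mul_sum]
    refine Finset.sum_congr rfl fun m _ => ?_
    have he : eL L ((n : ℤ) * t) * eL L (-((m : ℤ) * ((t : ℤ) + τ)))
        = eL L (((n : ℤ) - m) * t) * eL L (-((m : ℤ) * τ)) := by
      rw [← eL_add, ← eL_add]
      congr 1
      ring
    linear_combination (c * c * chat n * (starRingEnd ℂ) (chat m)) * he
  rw [pcc]
  calc ∑ t ∈ Finset.range L, U t * (starRingEnd ℂ) (U ((t + τ) % L))
      = ∑ t ∈ Finset.range L, ∑ n ∈ Finset.range L, ∑ m ∈ Finset.range L,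
          c * c * (chat n * (starRingEnd ℂ) (chat m) * eL L (-((m : ℤ) * τ))
            * eL L (((n : ℤ) - m) * t)) := Finset.sum_congr rfl hterm
    _ = ∑ n ∈ Finset.range L, ∑ m ∈ Finset.range L,
          (c * c * (chat n * (starRingEnd ℂ) (chat m) * eL L (-((m : ℤ) * τ)))) *
            ∑ t ∈ Finset.range L, eL L (((n : ℤ) - m) * t) := by
        rw [Finset.sum_comm]
        refine Finset.sum_congr rfl fun n _ => ?_
        rw [Finset.sum_comm]
        refine Finset.sum_congr rfl fun m _ => ?_
        rw [Finset.mul_sum]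
        exact Finset.sum_congr rfl fun t _ => by ring
    _ = ∑ n ∈ Finset.range L, ∑ m ∈ Finset.range L,
          (c * c * (chat n * (starRingEnd ℂ) (chat m) * eL L (-((m : ℤ) * τ)))) *
            (if n = m then (L : ℂ) else 0) := by
        refine Finset.sum_congr rfl fun n hn => Finset.sum_congr rfl fun m hm => ?_
        rw [horth n m hn hm]
    _ = ∑ n ∈ Finset.range L, (chat n * (starRingEnd ℂ) (chat n)) * eL L (-((n : ℤ) * τ)) := by
        refine Finset.sum_congr rfl fun n hn => ?_
        simp only [mul_ite, mul_zero]
        rw [Finset.sum_ite_eq, if_pos hn]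
        linear_combination (chat n * (starRingEnd ℂ) (chat n) * eL L (-((n : ℤ) * τ))) * hccL

/-- An `M × N` circular Florentine rectangle over `Z_N`. -/
def IsCFR (N M : ℕ) (σ : Fin M → Equiv.Perm (ZMod N)) : Prop :=
  ∀ m : ZMod N, m ≠ 0 → ∀ i j : Fin M, ∀ x y : ZMod N,
    σ i x = σ j y → σ i (x + m) = σ j (y + m) → i = j ∧ x = y

/-- The frequency-domain sequence of Construction 2, with `P = N+1`: writing
`n = P·r + s` (`r = n/P`, `s = n%P`), `û_n = 0` if `s = s₀`;
`û_n = √(P/N)·ω_N^{r·g(s)}·ω_{NP}^{s·g(s)}` if `s < s₀`; and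
`û_n = √(P/N)·ω_N^{r·g(s−1)}·ω_{NP}^{s·g(s−1)}` if `s > s₀`. -/
noncomputable def uhatC2 (N : ℕ) (g : ℕ → ℕ) (s0 : ℕ) (n : ℕ) : ℂ :=
  if n % (N + 1) = s0 then 0
  else if n % (N + 1) < s0 then
    (Real.sqrt (((N : ℝ) + 1) / (N : ℝ)) : ℂ) *
      Complex.exp (2 * (Real.pi : ℂ) * Complex.I *
        (((n / (N + 1)) * g (n % (N + 1)) : ℕ) : ℂ) / (N : ℂ)) *
      Complex.exp (2 * (Real.pi : ℂ) * Complex.I *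
        (((n % (N + 1)) * g (n % (N + 1)) : ℕ) : ℂ) / ((N * (N + 1) : ℕ) : ℂ))
  else
    (Real.sqrt (((N : ℝ) + 1) / (N : ℝ)) : ℂ) *
      Complex.exp (2 * (Real.pi : ℂ) * Complex.I *
        (((n / (N + 1)) * g (n % (N + 1) - 1) : ℕ) : ℂ) / (N : ℂ)) *
      Complex.exp (2 * (Real.pi : ℂ) * Complex.I *
        (((n % (N + 1)) * g (n % (N + 1) - 1) : ℕ) : ℂ) / ((N * (N + 1) : ℕ) : ℂ))

lemma uhat_mul_conj (N : ℕ) (hN : N ≠ 0) (g : ℕ → ℕ) (s0 : ℕ) (n : ℕ) :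
    uhatC2 N g s0 n * (starRingEnd ℂ) (uhatC2 N g s0 n)
      = if n % (N + 1) = s0 then 0 else ((((N : ℝ) + 1) / (N : ℝ) : ℝ) : ℂ) := by
  have hexp1 : ∀ A : ℕ, Complex.exp (2 * (Real.pi : ℂ) * Complex.I * ((A : ℕ) : ℂ) / (N : ℂ))
      = eL N (A : ℤ) := by
    intro A
    rw [eL]
    norm_cast
  have hexp2 : ∀ B : ℕ, Complex.exp (2 * (Real.pi : ℂ) * Complex.I * ((B : ℕ) : ℂ)
        / ((N * (N + 1) : ℕ) : ℂ)) = eL (N * (N + 1)) (B : ℤ) := by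
    intro B
    rw [eL]
    norm_cast
  have ha : ((Real.sqrt (((N : ℝ) + 1) / (N : ℝ)) : ℝ) : ℂ)
      * ((Real.sqrt (((N : ℝ) + 1) / (N : ℝ)) : ℝ) : ℂ)
      = ((((N : ℝ) + 1) / (N : ℝ) : ℝ) : ℂ) := by
    rw [← Complex.ofReal_mul, Real.mul_self_sqrt (by positivity)]
  rw [uhatC2]
  by_cases h1 : n % (N + 1) = s0
  · simp [h1]
  · rw [if_neg h1, if_neg h1]
    by_cases h2 : n % (N + 1) < s0
    · rw [if_pos h2, hexp1, hexp2]
      simp only [map_mul, Complex.conj_ofReal]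
      have e1 := eL_mul_conj N ((n / (N + 1)) * g (n % (N + 1)) : ℕ)
      have e2 := eL_mul_conj (N * (N + 1)) ((n % (N + 1)) * g (n % (N + 1)) : ℕ)
      set a : ℂ := ((Real.sqrt (((N : ℝ) + 1) / (N : ℝ)) : ℝ) : ℂ)
      set x1 := eL N (((n / (N + 1)) * g (n % (N + 1)) : ℕ) : ℤ)
      set x2 := eL (N * (N + 1)) (((n % (N + 1)) * g (n % (N + 1)) : ℕ) : ℤ)
      linear_combination (a * a * x2 * (starRingEnd ℂ) x2) * e1 + (a * a) * e2 + ha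
    · rw [if_neg h2, hexp1, hexp2]
      simp only [map_mul, Complex.conj_ofReal]
      have e1 := eL_mul_conj N ((n / (N + 1)) * g (n % (N + 1) - 1) : ℕ)
      have e2 := eL_mul_conj (N * (N + 1)) ((n % (N + 1)) * g (n % (N + 1) - 1) : ℕ)
      set a : ℂ := ((Real.sqrt (((N : ℝ) + 1) / (N : ℝ)) : ℝ) : ℂ)
      set x1 := eL N (((n / (N + 1)) * g (n % (N + 1) - 1) : ℕ) : ℤ)
      set x2 := eL (N * (N + 1)) (((n % (N + 1)) * g (n % (N + 1) - 1) : ℕ) : ℤ)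
      linear_combination (a * a * x2 * (starRingEnd ℂ) x2) * e1 + (a * a) * e2 + ha

/-- let `N ≥ 2`, `P = N+1`, `L = NP`, `σ 0, …, σ (M−1)` the rows of an
`M × N` CFR over `Z_N`, `g_{i,k} = σ_i⁻¹(k)`, and `0 ≤ s₀ < P`. For the time-domain
sequence `U^i` (inverse unitary DFT of the Construction-2 frequency sequence `Û^i`),
the periodic autocorrelation satisfies, for `0 < τ < L`: `|θ_{U^i}(τ)| = P` if
`N ∣ τ`, and `|θ_{U^i}(τ)| = 0` otherwise. -/
theorem stmt11 (N M : ℕ) (hN : 2 ≤ N) (σ : Fin M → Equiv.Perm (ZMod N))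
    (hCFR : IsCFR N M σ) (s0 : ℕ) (hs0 : s0 < N + 1)
    (i : Fin M) (U : ℕ → ℂ)
    (hU : ∀ t, U t =
      iudft (N * (N + 1)) (uhatC2 N (fun k => ((σ i).symm ((k : ℕ) : ZMod N)).val) s0) t)
    (τ : ℕ) (hτ1 : 0 < τ) (hτ2 : τ < N * (N + 1)) :
    (N ∣ τ → ‖pcc (N * (N + 1)) U U τ‖ = (N : ℝ) + 1) ∧
    (¬ N ∣ τ → ‖pcc (N * (N + 1)) U U τ‖ = 0) := by
  have hN0 : N ≠ 0 := by omega
  have hL : N * (N + 1) ≠ 0 := by positivity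
  set q : ℂ := ((((N : ℝ) + 1) / (N : ℝ) : ℝ) : ℂ) with hqdef
  have key := pcc_iudft (N * (N + 1)) hL
    (uhatC2 N (fun k => ((σ i).symm ((k : ℕ) : ZMod N)).val) s0) U hU τ
  -- rewrite the summand using uhat_mul_conj
  rw [Finset.sum_congr rfl (fun n _ => by
    rw [uhat_mul_conj N hN0 (fun k => ((σ i).symm ((k : ℕ) : ZMod N)).val) s0 n])] at key
  -- split the if
  have hsplit : ∀ n : ℕ,
      (if n % (N + 1) = s0 then (0 : ℂ) else q) * eL (N * (N + 1)) (-((n : ℤ) * τ))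
      = q * eL (N * (N + 1)) (-((n : ℤ) * τ))
        - (if n % (N + 1) = s0 then q * eL (N * (N + 1)) (-((n : ℤ) * τ)) else 0) := by
    intro n
    by_cases h : n % (N + 1) = s0 <;> simp [h]
  rw [Finset.sum_congr rfl (fun n _ => hsplit n), Finset.sum_sub_distrib] at key
  have hsum1 : ∑ n ∈ Finset.range (N * (N + 1)),
      q * eL (N * (N + 1)) (-((n : ℤ) * τ)) = 0 := by
    rw [← Finset.mul_sum]
    have h2 : ∀ n : ℕ, eL (N * (N + 1)) (-((n : ℤ) * τ))
        = eL (N * (N + 1)) ((-(τ : ℤ)) * n) := by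
      intro n
      congr 1
      ring
    rw [Finset.sum_congr rfl (fun n _ => h2 n), eL_sum _ hL, if_neg, mul_zero]
    rw [Int.dvd_neg]
    intro hd
    have : (N * (N + 1) : ℕ) ∣ τ := by exact_mod_cast hd
    have := Nat.le_of_dvd hτ1 this
    omega
  have hsum2 : ∑ n ∈ Finset.range (N * (N + 1)),
      (if n % (N + 1) = s0 then q * eL (N * (N + 1)) (-((n : ℤ) * τ)) else 0)
      = q * eL (N * (N + 1)) (-((s0 : ℤ) * τ))
        * (if (N : ℤ) ∣ (τ : ℤ) then (N : ℂ) else 0) := by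
    rw [← Finset.sum_filter]
    have hre : ∑ n ∈ (Finset.range (N * (N + 1))).filter (fun n => n % (N + 1) = s0),
        q * eL (N * (N + 1)) (-((n : ℤ) * τ))
        = ∑ r ∈ Finset.range N,
            q * eL (N * (N + 1)) (-((((N + 1) * r + s0 : ℕ) : ℤ) * τ)) := by
      refine Finset.sum_nbij' (fun n => n / (N + 1)) (fun r => (N + 1) * r + s0)
        ?_ ?_ ?_ ?_ ?_
      · intro a ha
        simp only [Finset.mem_filter, Finset.mem_range] at ha
        simp only [Finset.mem_range]
        rw [Nat.div_lt_iff_lt_mul (by omega)]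
        omega
      · intro r hr
        simp only [Finset.mem_range] at hr
        simp only [Finset.mem_filter, Finset.mem_range]
        constructor
        · calc (N + 1) * r + s0 < (N + 1) * r + (N + 1) := by omega
            _ = (N + 1) * (r + 1) := by ring
            _ ≤ (N + 1) * N := Nat.mul_le_mul_left _ (by omega)
            _ = N * (N + 1) := Nat.mul_comm _ _
        · rw [Nat.mul_add_mod]
          exact Nat.mod_eq_of_lt hs0
      · intro a ha
        simp only [Finset.mem_filter, Finset.mem_range] at ha
        show (N + 1) * (a / (N + 1)) + s0 = a
        rw [← ha.2]
        exact Nat.div_add_mod a (N + 1)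
      · intro r hr
        show ((N + 1) * r + s0) / (N + 1) = r
        rw [Nat.mul_add_div (by omega), Nat.div_eq_of_lt hs0, add_zero]
      · intro a ha
        simp only [Finset.mem_filter, Finset.mem_range] at ha
        have h3 : (N + 1) * (a / (N + 1)) + s0 = a := by
          rw [← ha.2]
          exact Nat.div_add_mod a (N + 1)
        show q * eL (N * (N + 1)) (-((a : ℤ) * τ))
          = q * eL (N * (N + 1)) (-((((N + 1) * (a / (N + 1)) + s0 : ℕ) : ℤ) * τ))
        rw [h3]
    rw [hre]
    have hterm : ∀ r : ℕ,
        q * eL (N * (N + 1)) (-((((N + 1) * r + s0 : ℕ) : ℤ) * τ))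
        = (q * eL (N * (N + 1)) (-((s0 : ℤ) * τ))) * eL N ((-(τ : ℤ)) * r) := by
      intro r
      have : eL (N * (N + 1)) (-((((N + 1) * r + s0 : ℕ) : ℤ) * τ))
          = eL (N * (N + 1)) (-((s0 : ℤ) * τ)) * eL (N * (N + 1)) (((N + 1 : ℕ) : ℤ) * ((-(τ : ℤ)) * r)) := by
        rw [← eL_add]
        congr 1
        push_cast
        ring
      rw [this, eL_shrink N (N + 1) hN0 (by omega)]
      ring
    rw [Finset.sum_congr rfl (fun r _ => hterm r), ← Finset.mul_sum, eL_sum N hN0]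
    simp only [Int.dvd_neg]
  rw [hsum1, hsum2, zero_sub] at key
  constructor
  · intro hd
    have hd' : (N : ℤ) ∣ (τ : ℤ) := Int.natCast_dvd_natCast.mpr hd
    rw [key, if_pos hd', norm_neg, norm_mul, norm_mul, norm_eL]
    rw [hqdef, Complex.norm_real, Complex.norm_natCast]
    rw [Real.norm_of_nonneg (by positivity)]
    have : (N : ℝ) ≠ 0 := Nat.cast_ne_zero.mpr hN0
    field_simp
  · intro hd
    have hd' : ¬ (N : ℤ) ∣ (τ : ℤ) := fun h => hd (Int.natCast_dvd_natCast.mp h)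
    rw [key, if_neg hd']
    simp
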